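/- arXiv:1908.08296 — 5 statements merged into one kernel-verified Lean document; each statement's English description precedes it below -/
import Mathlib

section
/- Let n ≥ 5 and let Φ ⊂ ℝ^n be the root system of type D_n with Weyl group W. Every unordered pair {r, r'} of orthogonal roots of Φ is W-conjugate to exactly one of the two pairs {e_1 − e_2, e_3 − e_4} and {e_{n−1} − e_n, e_{n−1} + e_n}: there exists w ∈ W with {w(r), w(r')} equal to one of these two pairs, and no element of W maps the pair {e_1 − e_2, e_3 − e_4} to the pair {e_{n−1} − e_n, e_{n−1} + e_n}. -/
/-!
A signed permutation can send any `m < n` coordinate vectors `e_{x t}` to any `± e_{y t}`: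
the parity condition defining `D_n` is met by changing one more sign, at a coordinate outside
the image. Two orthogonal roots `a e_i + b e_j`, `c e_k + d e_l` have either the same support,
and then they are `a e_i ± b e_j`, or disjoint supports; the first kind is moved to
`{e_{n-1} - e_n, e_{n-1} + e_n}` (two coordinates and a spare one) and the second to
`{e₁ - e₂, e₃ - e₄}` (four coordinates and a spare one, whence `n ≥ 5`). The two pairs are not
conjugate because signed permutations preserve disjointness of supports.
-/

namespace PaperD

/-- The `i`-th standard basis vector of `ℝ^n`. -/
def e (n : ℕ) (i : Fin n) : Fin n → ℝ := Pi.single i 1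

/-- The root system of type `D_n` inside `ℝ^n`: the vectors `±e_i ± e_j` for `i < j`. -/
def dRoots (n : ℕ) : Set (Fin n → ℝ) :=
  {v | ∃ i j : Fin n, i < j ∧ ∃ a b : ℝ,
      (a = 1 ∨ a = -1) ∧ (b = 1 ∨ b = -1) ∧ v = a • e n i + b • e n j}

/-- The Weyl group of type `D_n`: all transformations of `ℝ^n` that permute the coordinates
and change the signs of an even number of coordinates. -/
def dWeyl (n : ℕ) : Set ((Fin n → ℝ) → (Fin n → ℝ)) :=
  {w | ∃ (σ : Equiv.Perm (Fin n)) (s : Fin n → ℝ),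
      (∀ i, s i = 1 ∨ s i = -1) ∧ (∏ i, s i = 1) ∧
      ∀ v i, w v i = s i * v (σ⁻¹ i)}

/-- The unordered pair `{a, b}` is mapped to the unordered pair `{c, d}` by some element of
the Weyl group of type `D_n`. -/
def pairConj (n : ℕ) (a b c d : Fin n → ℝ) : Prop :=
  ∃ w ∈ dWeyl n, (w a = c ∧ w b = d) ∨ (w a = d ∧ w b = c)

lemma mul_eq_one_or_neg_one {a b : ℝ} (ha : a = 1 ∨ a = -1) (hb : b = 1 ∨ b = -1) :
    a * b = 1 ∨ a * b = -1 := by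
  rcases ha with rfl | rfl <;> rcases hb with rfl | rfl <;> norm_num

lemma prod_eq_one_or_neg_one {ι : Type*} [Fintype ι] {s : ι → ℝ}
    (hs : ∀ i, s i = 1 ∨ s i = -1) : ∏ i, s i = 1 ∨ ∏ i, s i = -1 :=
  Finset.prod_induction s (fun p => p = 1 ∨ p = -1) (fun _ _ => mul_eq_one_or_neg_one)
    (Or.inl rfl) fun i _ => hs i

lemma ne_zero_of_eq_one_or_neg_one {a : ℝ} (ha : a = 1 ∨ a = -1) : a ≠ 0 := by
  rcases ha with rfl | rfl <;> norm_num

lemma eq_and_eq_neg_of_mul_add_mul_eq_zero {a b c d : ℝ} (ha : a = 1 ∨ a = -1)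
    (hb : b = 1 ∨ b = -1) (hc : c = 1 ∨ c = -1) (hd : d = 1 ∨ d = -1) (h : a * c + b * d = 0) :
    c = a ∧ d = -b ∨ c = -a ∧ d = b := by
  rcases ha with rfl | rfl <;> rcases hb with rfl | rfl <;> rcases hc with rfl | rfl <;>
    rcases hd with rfl | rfl <;> revert h <;> norm_num

lemma isLinearMap_of_mem_dWeyl {n : ℕ} {w : (Fin n → ℝ) → Fin n → ℝ} (hw : w ∈ dWeyl n) :
    IsLinearMap ℝ w := by
  obtain ⟨σ, s, -, -, hw⟩ := hw
  constructor <;> intros <;> ext <;>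
    simp only [hw, Pi.add_apply, Pi.smul_apply, smul_eq_mul] <;> ring

lemma exists_mem_dWeyl_apply_e {n : ℕ} {ι : Type*} [Fintype ι] (hι : Fintype.card ι < n)
    {x y : ι → Fin n} (hx : x.Injective) (hy : y.Injective) {ε : ι → ℝ}
    (hε : ∀ t, ε t = 1 ∨ ε t = -1) :
    ∃ w ∈ dWeyl n, ∀ t, w (e n (x t)) = ε t • e n (y t) := by
  classical
  obtain ⟨σ, hσ⟩ := Equiv.Perm.exists_extending_pair x y hx hy
  obtain ⟨z, hz⟩ : ∃ z, ∀ t, y t ≠ z := by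
    by_contra! h
    exact hι.not_ge (by simpa using Fintype.card_le_of_surjective y h)
  have hs₀ : ∀ i, Function.extend y ε 1 i = 1 ∨ Function.extend y ε 1 i = -1 := by
    intro i
    by_cases hi : ∃ t, y t = i
    · obtain ⟨t, rfl⟩ := hi
      rw [hy.extend_apply]
      exact hε t
    · rw [Function.extend_apply' _ _ _ hi]
      exact Or.inl rfl
  -- the extra factor at the spare coordinate `z` makes the product of all signs `1`
  let s := Function.extend y ε 1 * Pi.mulSingle z (∏ i, Function.extend y ε 1 i)
  have hsy : ∀ t, s (y t) = ε t := fun t => by simp [s, hz t, hy.extend_apply]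
  refine ⟨fun v i => s i * v (σ⁻¹ i), ⟨σ, s, fun i => ?_, ?_, fun _ _ => rfl⟩, fun t => ?_⟩
  · refine mul_eq_one_or_neg_one (hs₀ i) ?_
    by_cases hi : i = z
    · subst hi
      simpa using prod_eq_one_or_neg_one hs₀
    · simp [hi]
  · simp only [s, Pi.mul_apply]
    rw [Finset.prod_mul_distrib, Fintype.prod_pi_mulSingle', mul_self_eq_one_iff]
    exact prod_eq_one_or_neg_one hs₀
  · ext i
    obtain ⟨q, rfl⟩ := σ.surjective i
    simp only [e, Pi.smul_apply, smul_eq_mul, Equiv.Perm.coe_inv, Equiv.symm_apply_apply,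
      ← hσ t, Pi.single_apply, σ.injective.eq_iff]
    split_ifs with h
    · rw [h, hσ, hsy]
    · rw [mul_zero, mul_zero]

lemma orthogonal_roots_cases {n : ℕ} {i j k l : Fin n} (hij : i < j) (hkl : k < l)
    {a b c d : ℝ} (ha : a = 1 ∨ a = -1) (hb : b = 1 ∨ b = -1) (hc : c = 1 ∨ c = -1)
    (hd : d = 1 ∨ d = -1) (h : (a • e n i + b • e n j) ⬝ᵥ (c • e n k + d • e n l) = 0) :
    (k = i ∧ l = j ∧ (c = a ∧ d = -b ∨ c = -a ∧ d = b)) ∨ Function.Injective ![i, j, k, l] := by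
  simp only [add_dotProduct, smul_dotProduct, e, single_dotProduct, one_mul, Pi.add_apply,
    Pi.smul_apply, Pi.single_apply, smul_eq_mul, mul_ite, mul_one, mul_zero] at h
  have := ne_zero_of_eq_one_or_neg_one ha
  have := ne_zero_of_eq_one_or_neg_one hb
  have := ne_zero_of_eq_one_or_neg_one hc
  have := ne_zero_of_eq_one_or_neg_one hd
  -- if the supports share exactly one coordinate, the inner product is `±1`
  split_ifs at h <;> subst_vars
  all_goals first
    | (exfalso; order)
    | exact .inl ⟨rfl, rfl, eq_and_eq_neg_of_mul_add_mul_eq_zero ha hb hc hd (by simpa using h)⟩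
    | (exfalso; simp_all; done)
    | (right; intro p q hpq; fin_cases p <;> fin_cases q <;> simp_all [eq_comm])

lemma pairConj_of_same_support {n : ℕ} (hn : 2 < n) {i j p q : Fin n} (hij : i ≠ j)
    (hpq : p ≠ q) {a b : ℝ} (ha : a = 1 ∨ a = -1) (hb : b = 1 ∨ b = -1) :
    pairConj n (a • e n i + b • e n j) (a • e n i + (-b) • e n j) (e n p - e n q)
      (e n p + e n q) := by
  obtain ⟨w, hw, hwe⟩ := exists_mem_dWeyl_apply_e (x := ![i, j]) (y := ![p, q]) (ε := ![a, b])
    (by simpa using hn) (injective_pair_iff_ne.mpr hij) (injective_pair_iff_ne.mpr hpq)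
    (Fin.forall_fin_two.mpr ⟨ha, hb⟩)
  have hwi : w (e n i) = a • e n p := hwe 0
  have hwj : w (e n j) = b • e n q := hwe 1
  have hlin := isLinearMap_of_mem_dWeyl hw
  refine ⟨w, hw, .inr ⟨?_, ?_⟩⟩ <;>
    simp only [hlin.map_add, hlin.map_neg, hlin.map_smul, hwi, hwj, smul_smul, neg_smul,
      mul_self_eq_one_iff.mpr ha, mul_self_eq_one_iff.mpr hb, one_smul, sub_eq_add_neg]

lemma pairConj_of_disjoint_support {n : ℕ} (hn : 4 < n) {x y : Fin 4 → Fin n}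
    (hx : x.Injective) (hy : y.Injective) {a b c d : ℝ} (ha : a = 1 ∨ a = -1)
    (hb : b = 1 ∨ b = -1) (hc : c = 1 ∨ c = -1) (hd : d = 1 ∨ d = -1) :
    pairConj n (a • e n (x 0) + b • e n (x 1)) (c • e n (x 2) + d • e n (x 3))
      (e n (y 0) - e n (y 1)) (e n (y 2) - e n (y 3)) := by
  obtain ⟨w, hw, hwe⟩ := exists_mem_dWeyl_apply_e (ε := ![a, -b, c, -d]) (by simpa using hn)
    hx hy (by simp [Fin.forall_fin_succ, ha, hb, hc, hd, neg_eq_iff_eq_neg, or_comm])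
  have hlin := isLinearMap_of_mem_dWeyl hw
  refine ⟨w, hw, .inl ⟨?_, ?_⟩⟩ <;>
    simp only [hlin.map_add, hlin.map_smul, hwe, smul_smul, Matrix.cons_val, smul_neg, neg_smul,
      mul_self_eq_one_iff.mpr ha, mul_self_eq_one_iff.mpr hb, mul_self_eq_one_iff.mpr hc,
      mul_self_eq_one_iff.mpr hd, one_smul, sub_eq_add_neg]

lemma mul_apply_eq_zero_of_mem_dWeyl {n : ℕ} {w : (Fin n → ℝ) → Fin n → ℝ}
    (hw : w ∈ dWeyl n) {u v : Fin n → ℝ} (huv : ∀ q, u q * v q = 0) (q : Fin n) :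
    w u q * w v q = 0 := by
  obtain ⟨σ, s, -, -, hw⟩ := hw
  rw [hw, hw, mul_mul_mul_comm, huv, mul_zero]

lemma not_pairConj_of_disjoint_support {n : ℕ} {u v c d : Fin n → ℝ}
    (huv : ∀ q, u q * v q = 0) {q : Fin n} (hcd : c q * d q ≠ 0) : ¬ pairConj n u v c d := by
  rintro ⟨w, hw, ⟨rfl, rfl⟩ | ⟨rfl, rfl⟩⟩
  · exact hcd (mul_apply_eq_zero_of_mem_dWeyl hw huv q)
  · exact hcd (mul_comm (w u q) _ ▸ mul_apply_eq_zero_of_mem_dWeyl hw huv q)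

/-- For `n ≥ 5`, every unordered pair of orthogonal roots of `D_n` is Weyl-conjugate to
exactly one of the two pairs `{e₁ - e₂, e₃ - e₄}` and `{e_{n-1} - e_n, e_{n-1} + e_n}`:
it is conjugate to one of them, and no Weyl element maps the first pair to the second. -/
theorem orth_pair_classification_D (n : ℕ) (hn : 5 ≤ n)
    (r r' : Fin n → ℝ) (hr : r ∈ dRoots n) (hr' : r' ∈ dRoots n)
    (horth : ∑ i, r i * r' i = 0) :
    (pairConj n r r'
        (e n ⟨0, by omega⟩ - e n ⟨1, by omega⟩) (e n ⟨2, by omega⟩ - e n ⟨3, by omega⟩) ∨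
      pairConj n r r'
        (e n ⟨n - 2, by omega⟩ - e n ⟨n - 1, by omega⟩)
        (e n ⟨n - 2, by omega⟩ + e n ⟨n - 1, by omega⟩)) ∧
    ¬ pairConj n
        (e n ⟨0, by omega⟩ - e n ⟨1, by omega⟩) (e n ⟨2, by omega⟩ - e n ⟨3, by omega⟩)
        (e n ⟨n - 2, by omega⟩ - e n ⟨n - 1, by omega⟩)
        (e n ⟨n - 2, by omega⟩ + e n ⟨n - 1, by omega⟩) := by
  have hlast : (⟨n - 2, by omega⟩ : Fin n) ≠ ⟨n - 1, by omega⟩ := by simp [Fin.ext_iff]; omega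
  refine ⟨?_, not_pairConj_of_disjoint_support (q := ⟨n - 2, by omega⟩) ?_ ?_⟩
  · obtain ⟨i, j, hij, a, b, ha, hb, rfl⟩ := hr
    obtain ⟨k, l, hkl, c, d, hc, hd, rfl⟩ := hr'
    rcases orthogonal_roots_cases hij hkl ha hb hc hd horth with
      ⟨rfl, rfl, ⟨rfl, rfl⟩ | ⟨rfl, rfl⟩⟩ | hdistinct
    · exact .inr (pairConj_of_same_support (by omega) hij.ne hlast ha hb)
    · rw [add_comm (a • _), add_comm (-a • _)]
      exact .inr (pairConj_of_same_support (by omega) hij.ne' hlast hb ha)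
    · exact .inl (pairConj_of_disjoint_support (by omega) hdistinct
        (Fin.castLE_injective (by omega)) ha hb hc hd)
  · intro q
    simp only [e, Pi.sub_apply, Pi.single_apply, Fin.ext_iff]
    split_ifs <;> norm_num <;> omega
  · simp [e, hlast]

end PaperD
end

section
/- Let Φ ⊂ ℝ^4 be the root system of type D_4 with Weyl group W. Every unordered pair {r, r'} of orthogonal roots of Φ is W-conjugate to exactly one of the three pairs {e_1 − e_2, e_3 − e_4}, {e_1 − e_2, e_3 + e_4} and {e_3 − e_4, e_3 + e_4}: there exists w ∈ W mapping {r,r'} to one of these pairs, and no two of these three pairs are W-conjugate to each other. -/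
/-!
Every element of `W` multiplies the coordinates of a vector by signs with product `1` and then
permutes them, so it preserves `∏ᵢ vᵢ`; being linear, it therefore preserves `∏ᵢ (r + r')ᵢ` for
every unordered pair `{r, r'}`. This invariant takes the values `1`, `-1`, `0` on the three
pairs, which are hence pairwise non-conjugate.

Two orthogonal roots `r = a eᵢ + b eⱼ` and `r' = c eₖ + d eₗ` either have disjoint supports or
the same support. In the first case a signed permutation sending `i, j, k, l` to `1, 2, 3, 4`
maps them to `e₁ - e₂` and `e₃ - abcd e₄`: the fourth sign is forced by the requirement that
the number of sign changes be even. In the second case, after possibly exchanging `i` and `j`,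
`r' = a eᵢ - b eⱼ`, and a signed permutation sending `i, j` to `3, 4` with the signs `a, b`
maps `r, r'` to `e₃ + e₄, e₃ - e₄`; the sign `ab` on the first coordinate fixes the parity.
-/

namespace PaperD4

/-- The `i`-th standard basis vector of `ℝ^n`. -/
def e (n : ℕ) (i : Fin n) : Fin n → ℝ := Pi.single i 1

/-- The root system of type `D_n` inside `ℝ^n`: the vectors `±e_i ± e_j` for `i < j`. -/
def dRoots (n : ℕ) : Set (Fin n → ℝ) :=
  {v | ∃ i j : Fin n, i < j ∧ ∃ a b : ℝ,
      (a = 1 ∨ a = -1) ∧ (b = 1 ∨ b = -1) ∧ v = a • e n i + b • e n j}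

/-- The Weyl group of type `D_n`: all transformations of `ℝ^n` that permute the coordinates
and change the signs of an even number of coordinates. -/
def dWeyl (n : ℕ) : Set ((Fin n → ℝ) → (Fin n → ℝ)) :=
  {w | ∃ (σ : Equiv.Perm (Fin n)) (s : Fin n → ℝ),
      (∀ i, s i = 1 ∨ s i = -1) ∧ (∏ i, s i = 1) ∧
      ∀ v i, w v i = s i * v (σ⁻¹ i)}

/-- The unordered pair `{a, b}` is mapped to the unordered pair `{c, d}` by some element of
the Weyl group of type `D_n`. -/
def pairConj (n : ℕ) (a b c d : Fin n → ℝ) : Prop :=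
  ∃ w ∈ dWeyl n, (w a = c ∧ w b = d) ∨ (w a = d ∧ w b = c)

/-- `e₁ - e₂` in `ℝ⁴`. -/
def f₁ : Fin 4 → ℝ := e 4 0 - e 4 1
/-- `e₃ - e₄` in `ℝ⁴`. -/
def f₂ : Fin 4 → ℝ := e 4 2 - e 4 3
/-- `e₃ + e₄` in `ℝ⁴`. -/
def f₃ : Fin 4 → ℝ := e 4 2 + e 4 3

open Finset

section

variable {n : ℕ}

def signedPerm (σ : Equiv.Perm (Fin n)) (s : Fin n → ℝ) (v : Fin n → ℝ) : Fin n → ℝ :=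
  fun i => s i * v (σ⁻¹ i)

lemma signedPerm_mem_dWeyl {σ : Equiv.Perm (Fin n)} {s : Fin n → ℝ}
    (hs : ∀ i, s i = 1 ∨ s i = -1) (hprod : ∏ i, s i = 1) : signedPerm σ s ∈ dWeyl n :=
  ⟨σ, s, hs, hprod, fun _ _ => rfl⟩

lemma signedPerm_e (σ : Equiv.Perm (Fin n)) (s : Fin n → ℝ) (k : Fin n) :
    signedPerm σ s (e n k) = s (σ k) • e n (σ k) := by
  funext m
  by_cases h : m = σ k
  · simp [signedPerm, e, h]
  · simp [signedPerm, e, h, Equiv.symm_apply_eq]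

lemma signedPerm_smul_add_smul (σ : Equiv.Perm (Fin n)) (s : Fin n → ℝ) (a b : ℝ) (i j : Fin n) :
    signedPerm σ s (a • e n i + b • e n j) =
      (s (σ i) * a) • e n (σ i) + (s (σ j) * b) • e n (σ j) := by
  have : signedPerm σ s (a • e n i + b • e n j) =
      a • signedPerm σ s (e n i) + b • signedPerm σ s (e n j) := by
    funext m; simp only [signedPerm, Pi.add_apply, Pi.smul_apply, smul_eq_mul]; ring
  rw [this, signedPerm_e, signedPerm_e, smul_smul, smul_smul, mul_comm a, mul_comm b]

lemma map_add_of_mem_dWeyl {w : (Fin n → ℝ) → Fin n → ℝ} (hw : w ∈ dWeyl n) (v v' : Fin n → ℝ) :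
    w (v + v') = w v + w v' := by
  obtain ⟨σ, s, -, -, hw⟩ := hw
  funext i
  simp only [hw, Pi.add_apply, mul_add]

lemma prod_apply_of_mem_dWeyl {w : (Fin n → ℝ) → Fin n → ℝ} (hw : w ∈ dWeyl n) (v : Fin n → ℝ) :
    ∏ i, w v i = ∏ i, v i := by
  obtain ⟨σ, s, -, hprod, hw⟩ := hw
  simp only [hw, prod_mul_distrib, hprod, one_mul]
  exact Equiv.prod_comp σ⁻¹ v

lemma prod_add_apply_of_mem_dWeyl {w : (Fin n → ℝ) → Fin n → ℝ} (hw : w ∈ dWeyl n)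
    (v v' : Fin n → ℝ) : ∏ i, (w v i + w v' i) = ∏ i, (v i + v' i) := by
  simpa [map_add_of_mem_dWeyl hw] using prod_apply_of_mem_dWeyl hw (v + v')

lemma prod_add_eq_of_pairConj {a b c d : Fin n → ℝ} (h : pairConj n a b c d) :
    ∏ i, (a i + b i) = ∏ i, (c i + d i) := by
  obtain ⟨w, hw, ⟨rfl, rfl⟩ | ⟨rfl, rfl⟩⟩ := h
  · exact (prod_add_apply_of_mem_dWeyl hw a b).symm
  · rw [← prod_add_apply_of_mem_dWeyl hw a b]
    exact prod_congr rfl fun _ _ => add_comm _ _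

lemma sum_mul_smul_add_smul (x : Fin n → ℝ) (c d : ℝ) (k l : Fin n) :
    ∑ m, x m * (c • e n k + d • e n l) m = x k * c + x l * d := by
  simp [e, mul_add, sum_add_distrib, Pi.single_apply]

lemma support_eq_or_disjoint_of_sum_mul_eq_zero {i j k l : Fin n} (hij : i < j) (hkl : k < l)
    {a b c d : ℝ} (ha : a ≠ 0) (hb : b ≠ 0) (hc : c ≠ 0) (hd : d ≠ 0)
    (h : ∑ m, (a • e n i + b • e n j) m * (c • e n k + d • e n l) m = 0) :
    (i = k ∧ j = l ∧ a * c + b * d = 0) ∨ (i ≠ k ∧ i ≠ l ∧ j ≠ k ∧ j ≠ l) := by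
  rw [sum_mul_smul_add_smul] at h
  rcases eq_or_ne i k with rfl | h1 <;> rcases eq_or_ne j l with rfl | h4
  · simp_all [e, hij.ne']
  · simp [e, hij.ne', hkl.ne', h4.symm, ha, hc] at h
  · simp [e, hij.ne, hkl.ne, h1.symm, hb, hd] at h
  · refine Or.inr ⟨h1, fun h2 => ?_, fun h3 => ?_, h4⟩
    · subst h2
      simp [e, hkl.ne, hij.ne, (hkl.trans hij).ne, ha, hd] at h
    · subst h3
      simp [e, hij.ne', hkl.ne', (hij.trans hkl).ne', hb, hc] at h

end

lemma mul_eq_one_or_eq_neg_one {x y : ℝ} (hx : x = 1 ∨ x = -1) (hy : y = 1 ∨ y = -1) :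
    x * y = 1 ∨ x * y = -1 := by
  rcases hx with rfl | rfl <;> rcases hy with rfl | rfl <;> norm_num

lemma pairConj_f₁_of_disjoint {i j k l : Fin 4} (hij : i ≠ j) (hik : i ≠ k) (hil : i ≠ l)
    (hjk : j ≠ k) (hjl : j ≠ l) (hkl : k ≠ l) {a b c d : ℝ}
    (ha : a = 1 ∨ a = -1) (hb : b = 1 ∨ b = -1) (hc : c = 1 ∨ c = -1) (hd : d = 1 ∨ d = -1) :
    pairConj 4 (a • e 4 i + b • e 4 j) (c • e 4 k + d • e 4 l)
      f₁ (e 4 2 - (a * b * c * d) • e 4 3) := by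
  have hinj : Function.Injective ![i, j, k, l] := by
    simp only [Matrix.vecCons, Fin.cons_injective_iff]
    simp [Function.injective_of_subsingleton, Ne.symm, *]
  obtain ⟨σ, hσ⟩ := Equiv.Perm.exists_extending_pair ![i, j, k, l] id hinj Function.injective_id
  have hσi : σ i = 0 := hσ 0
  have hσj : σ j = 1 := hσ 1
  have hσk : σ k = 2 := hσ 2
  have hσl : σ l = 3 := hσ 3
  have ha2 := mul_self_eq_one_iff.mpr ha
  have hb2 := mul_self_eq_one_iff.mpr hb
  have hc2 := mul_self_eq_one_iff.mpr hc
  have hd2 := mul_self_eq_one_iff.mpr hd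
  set t := a * b * c * d
  have ht2 : t * t = 1 := mul_self_eq_one_iff.mpr <|
    mul_eq_one_or_eq_neg_one (mul_eq_one_or_eq_neg_one (mul_eq_one_or_eq_neg_one ha hb) hc) hd
  refine ⟨signedPerm σ ![a, -b, c, -(t * d)], signedPerm_mem_dWeyl ?_ ?_, Or.inl ⟨?_, ?_⟩⟩
  · intro m
    refine mul_self_eq_one_iff.mp ?_
    fin_cases m <;> simp [ha2, hb2, hc2]
    linear_combination (d * d) * ht2 + hd2
  · simp [Fin.prod_univ_four]
    linear_combination ht2
  · rw [signedPerm_smul_add_smul, hσi, hσj]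
    simp [f₁, ha2, hb2, sub_eq_add_neg]
  · rw [signedPerm_smul_add_smul, hσk, hσl]
    simp [hc2, sub_eq_add_neg, mul_assoc, hd2]

lemma pairConj_of_disjoint {i j k l : Fin 4} (hij : i ≠ j) (hik : i ≠ k) (hil : i ≠ l)
    (hjk : j ≠ k) (hjl : j ≠ l) (hkl : k ≠ l) {a b c d : ℝ}
    (ha : a = 1 ∨ a = -1) (hb : b = 1 ∨ b = -1) (hc : c = 1 ∨ c = -1) (hd : d = 1 ∨ d = -1) :
    pairConj 4 (a • e 4 i + b • e 4 j) (c • e 4 k + d • e 4 l) f₁ f₂ ∨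
      pairConj 4 (a • e 4 i + b • e 4 j) (c • e 4 k + d • e 4 l) f₁ f₃ := by
  have hconj := pairConj_f₁_of_disjoint hij hik hil hjk hjl hkl ha hb hc hd
  rcases mul_eq_one_or_eq_neg_one (mul_eq_one_or_eq_neg_one (mul_eq_one_or_eq_neg_one ha hb) hc) hd
    with h | h <;> rw [h] at hconj
  · exact Or.inl (by simpa [f₂] using hconj)
  · exact Or.inr (by simpa [f₃] using hconj)

lemma pairConj_of_neg_right {i j : Fin 4} (hij : i ≠ j) {a b : ℝ}
    (ha : a = 1 ∨ a = -1) (hb : b = 1 ∨ b = -1) :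
    pairConj 4 (a • e 4 i + b • e 4 j) (a • e 4 i + (-b) • e 4 j) f₂ f₃ := by
  have hinj : Function.Injective ![i, j] := by
    simp only [Matrix.vecCons, Fin.cons_injective_iff]
    simp [Function.injective_of_subsingleton, hij]
  obtain ⟨σ, hσ⟩ := Equiv.Perm.exists_extending_pair ![i, j] ![2, 3] hinj (by decide)
  have hσi : σ i = 2 := hσ 0
  have hσj : σ j = 3 := hσ 1
  have ha2 := mul_self_eq_one_iff.mpr ha
  have hb2 := mul_self_eq_one_iff.mpr hb
  refine ⟨signedPerm σ ![a * b, 1, a, b], signedPerm_mem_dWeyl ?_ ?_, Or.inr ⟨?_, ?_⟩⟩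
  · intro m
    refine mul_self_eq_one_iff.mp ?_
    fin_cases m <;> simp [ha2, hb2]
    linear_combination (b * b) * ha2 + hb2
  · simp [Fin.prod_univ_four]
    linear_combination (b * b) * ha2 + hb2
  · rw [signedPerm_smul_add_smul, hσi, hσj]
    simp [f₃, ha2, hb2]
  · rw [signedPerm_smul_add_smul, hσi, hσj]
    simp [f₂, ha2, hb2, sub_eq_add_neg]

lemma pairConj_of_same_support {i j : Fin 4} (hij : i ≠ j) {a b c d : ℝ}
    (ha : a = 1 ∨ a = -1) (hb : b = 1 ∨ b = -1) (hc : c = 1 ∨ c = -1) (hd : d = 1 ∨ d = -1)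
    (h : a * c + b * d = 0) :
    pairConj 4 (a • e 4 i + b • e 4 j) (c • e 4 i + d • e 4 j) f₂ f₃ := by
  have hcd : (c = a ∧ d = -b) ∨ (c = -a ∧ d = b) := by
    rcases ha with rfl | rfl <;> rcases hb with rfl | rfl <;> rcases hc with rfl | rfl <;>
      rcases hd with rfl | rfl <;> norm_num at h <;> norm_num
  rcases hcd with ⟨rfl, rfl⟩ | ⟨rfl, rfl⟩
  · exact pairConj_of_neg_right hij ha hb
  · rw [add_comm (a • _), add_comm ((-a) • _)]
    exact pairConj_of_neg_right hij.symm hb ha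

lemma prod_f₁_add_f₂ : ∏ i, (f₁ i + f₂ i) = 1 := by
  simp [Fin.prod_univ_four, f₁, f₂, e]

lemma prod_f₁_add_f₃ : ∏ i, (f₁ i + f₃ i) = -1 := by
  simp [Fin.prod_univ_four, f₁, f₃, e]

lemma prod_f₂_add_f₃ : ∏ i, (f₂ i + f₃ i) = 0 := by
  simp [Fin.prod_univ_four, f₂, f₃, e]

/-- Every unordered pair of orthogonal roots of `D_4` is Weyl-conjugate to exactly one of the
three pairs `{e₁ - e₂, e₃ - e₄}`, `{e₁ - e₂, e₃ + e₄}` and `{e₃ - e₄, e₃ + e₄}`: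
it is conjugate to one of them, and no two of these three pairs are Weyl-conjugate. -/
theorem orth_pair_classification_D4
    (r r' : Fin 4 → ℝ) (hr : r ∈ dRoots 4) (hr' : r' ∈ dRoots 4)
    (horth : ∑ i, r i * r' i = 0) :
    (pairConj 4 r r' f₁ f₂ ∨ pairConj 4 r r' f₁ f₃ ∨ pairConj 4 r r' f₂ f₃) ∧
    ¬ pairConj 4 f₁ f₂ f₁ f₃ ∧ ¬ pairConj 4 f₁ f₂ f₂ f₃ ∧ ¬ pairConj 4 f₁ f₃ f₂ f₃ ∧
    ¬ pairConj 4 f₁ f₃ f₁ f₂ ∧ ¬ pairConj 4 f₂ f₃ f₁ f₂ ∧ ¬ pairConj 4 f₂ f₃ f₁ f₃ := by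
  obtain ⟨i, j, hij, a, b, ha, hb, rfl⟩ := hr
  obtain ⟨k, l, hkl, c, d, hc, hd, rfl⟩ := hr'
  have ne_zero {x : ℝ} (hx : x = 1 ∨ x = -1) : x ≠ 0 := by rcases hx with rfl | rfl <;> norm_num
  refine ⟨?_, ?_⟩
  · rcases support_eq_or_disjoint_of_sum_mul_eq_zero hij hkl (ne_zero ha) (ne_zero hb)
      (ne_zero hc) (ne_zero hd) horth with ⟨rfl, rfl, h⟩ | ⟨hik, hil, hjk, hjl⟩
    · exact Or.inr (Or.inr (pairConj_of_same_support hij.ne ha hb hc hd h))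
    · exact (pairConj_of_disjoint hij.ne hik hil hjk hjl hkl.ne ha hb hc hd).imp_right Or.inl
  · refine ⟨?_, ?_, ?_, ?_, ?_, ?_⟩ <;> intro h <;> have := prod_add_eq_of_pairConj h <;>
      norm_num [prod_f₁_add_f₂, prod_f₁_add_f₃, prod_f₂_add_f₃] at this

end PaperD4
end

section
/- Let Φ be a reduced crystallographic simply-laced root system with base Δ and Weyl group W. For any two orthogonal roots r, r' ∈ Φ (i.e. ⟨r,r'⟩ = 0) there exist w ∈ W and simple roots α, α' ∈ Δ with ⟨α,α'⟩ = 0 such that w(r) = α and w(r') = α'. (Paper's Corollary: any pair of orthogonal roots in a simply-laced 𝔤 is Weyl-conjugate to a pair of orthogonal simple roots.) -/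
open scoped InnerProductSpace

namespace PaperRS

variable {E : Type*} [NormedAddCommGroup E] [InnerProductSpace ℝ E]

/-- A reduced crystallographic simply-laced root system, normalized so that every root has
squared length `2` (hence `⟪δ, ε⟫` is the Cartan integer `⟨δ, ε^∨⟩`). -/
structure IsRootSystem (Φ : Set E) : Prop where
  finite : Φ.Finite
  nonzero : (0 : E) ∉ Φ
  span_top : Submodule.span ℝ Φ = ⊤
  norm_two : ∀ α ∈ Φ, ⟪α, α⟫_ℝ = 2
  reduced : ∀ α ∈ Φ, ∀ t : ℝ, t • α ∈ Φ → t = 1 ∨ t = -1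
  cartan_int : ∀ α ∈ Φ, ∀ β ∈ Φ, ∃ n : ℤ, ⟪α, β⟫_ℝ = (n : ℝ)
  reflect_mem : ∀ α ∈ Φ, ∀ β ∈ Φ, β - ⟪β, α⟫_ℝ • α ∈ Φ

/-- Irreducibility: `Φ` is nonempty and cannot be split into two mutually orthogonal parts. -/
def IsIrreducible (Φ : Set E) : Prop :=
  Φ.Nonempty ∧ ∀ Φ₁ Φ₂ : Set E, Φ = Φ₁ ∪ Φ₂ →
    (∀ a ∈ Φ₁, ∀ b ∈ Φ₂, ⟪a, b⟫_ℝ = 0) → Φ₁ = ∅ ∨ Φ₂ = ∅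

/-- The reflection in (the hyperplane orthogonal to) a root `α` of squared length `2`. -/
def sRefl (α : E) : Function.End E := fun x => x - ⟪x, α⟫_ℝ • α

/-- The group generated by the reflections in the elements of `S`; since every reflection is
an involution, the submonoid generated by the reflections coincides with the generated group. -/
def genBy (S : Set E) : Submonoid (Function.End E) :=
  Submonoid.closure (sRefl '' S)

/-- The Weyl group of `Φ`: the group generated by the reflections in all the roots. -/
abbrev WeylGroup (Φ : Set E) : Submonoid (Function.End E) := genBy Φ

/-- A base (set of simple roots) of `Φ`, together with the (unique) integer coefficients
`coeff δ γ` of each root `δ` with respect to the simple roots. -/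
structure Base (Φ : Set E) where
  Δ : Finset E
  coeff : E → E → ℤ
  subset : ↑Δ ⊆ Φ
  indep : LinearIndependent ℝ (fun γ : {x : E // x ∈ Δ} => (γ : E))
  expand : ∀ δ ∈ Φ, δ = ∑ γ ∈ Δ, (coeff δ γ : ℝ) • γ
  sign : ∀ δ ∈ Φ, (∀ γ ∈ Δ, 0 ≤ coeff δ γ) ∨ (∀ γ ∈ Δ, coeff δ γ ≤ 0)

variable {Φ : Set E}

/-- `θ` is the highest root of `Φ` with respect to the base `B`. -/
def IsHighest (B : Base Φ) (θ : E) : Prop :=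
  θ ∈ Φ ∧ ∀ δ ∈ Φ, ∀ γ ∈ B.Δ, B.coeff δ γ ≤ B.coeff θ γ

/-- `α` is a Heisenberg simple root: the highest root `θ` has `α`-coefficient `2`, and every
root other than `±θ` has `α`-coefficient in `{-1, 0, 1}`. -/
def IsHeisenberg (B : Base Φ) (θ α : E) : Prop :=
  B.coeff θ α = 2 ∧
    ∀ δ ∈ Φ, δ ≠ θ → δ ≠ -θ →
      B.coeff δ α = -1 ∨ B.coeff δ α = 0 ∨ B.coeff δ α = 1

/-- `α` is an extreme simple root with (unique) neighbour `β`. -/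
def IsExtreme (B : Base Φ) (α β : E) : Prop :=
  β ∈ B.Δ ∧ β ≠ α ∧ ⟪α, β⟫_ℝ ≠ 0 ∧
    ∀ γ ∈ B.Δ, γ ≠ α → ⟪α, γ⟫_ℝ ≠ 0 → γ = β

/-- `Φ_α`: the roots with `α`-coefficient `1` that are orthogonal to `α`. -/
def PhiSet (B : Base Φ) (α : E) : Set E :=
  {ε ∈ Φ | B.coeff ε α = 1 ∧ ⟪ε, α⟫_ℝ = 0}

/-- `Ψ_α`: the roots `ε` with `α`-coefficient `1` and `⟪ε, α⟫ ≤ 0`. -/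
def PsiSet (B : Base Φ) (α : E) : Set E :=
  {ε ∈ Φ | B.coeff ε α = 1 ∧ ⟪ε, α⟫_ℝ ≤ 0}

/-!
Choose `u` orthogonal to `r` and `r'` but to no other root (the only roots in the span of `r`
and `r'` are `±r`, `±r'`), and put `v = r + r' + M • u` with `M` large. Then `v` is regular,
`⟪v, ±r⟫ = ⟪v, ±r'⟫ = ±2`, and on every other root `⟪v, ·⟫` has the sign of `⟪u, ·⟫`. Hence if
`r = s + t` with `⟪v, s⟫, ⟪v, t⟫ > 0`, both values lie in `(0, 2)`, so `⟪u, s⟫, ⟪u, t⟫ > 0`,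
contradicting `⟪u, r⟫ = 0`: `r` and `r'` are simple roots of the positive system cut out by `v`.
Reflecting in simple roots on which `v` is negative strictly decreases the number of positive
roots on which `v` is negative, which yields `w` in the Weyl group with `w v` dominant. Then `w`
carries the positive system of `v` to that of `B`, so `w r` and `w r'` are simple roots, and they
are orthogonal because `w` is an isometry.
-/

open Set

variable {α δ s t : E}

namespace IsRootSystem

variable (hΦ : IsRootSystem Φ)
include hΦ

lemma abs_inner_le_one (hs : s ∈ Φ) (ht : t ∈ Φ) (hne : s ≠ t) (hne' : s ≠ -t) :
    |⟪s, t⟫_ℝ| ≤ 1 := by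
  have hsub : 0 < ⟪s - t, s - t⟫_ℝ := real_inner_self_pos.2 (sub_ne_zero.2 hne)
  have hadd : 0 < ⟪s + t, s + t⟫_ℝ := real_inner_self_pos.2 (by rwa [← sub_neg_eq_add, sub_ne_zero])
  rw [real_inner_sub_sub_self, hΦ.norm_two s hs, hΦ.norm_two t ht] at hsub
  rw [real_inner_add_add_self, hΦ.norm_two s hs, hΦ.norm_two t ht] at hadd
  obtain ⟨n, hn⟩ := hΦ.cartan_int s hs t ht
  rw [hn] at hsub hadd ⊢
  have hlo : -2 < n := by exact_mod_cast (by linarith : (-2 : ℝ) < n)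
  have hhi : n < 2 := by exact_mod_cast (by linarith : (n : ℝ) < 2)
  exact_mod_cast abs_le.2 ⟨by omega, by omega⟩

lemma inner_eq_one_of_pos (hs : s ∈ Φ) (ht : t ∈ Φ) (hne : s ≠ t) (hpos : 0 < ⟪s, t⟫_ℝ) :
    ⟪s, t⟫_ℝ = 1 := by
  have hne' : s ≠ -t := by
    rintro rfl
    rw [inner_neg_left, hΦ.norm_two t ht] at hpos
    norm_num at hpos
  obtain ⟨n, hn⟩ := hΦ.cartan_int s hs t ht
  have hle := hΦ.abs_inner_le_one hs ht hne hne'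
  rw [hn] at hpos hle ⊢
  have hpos' : 0 < n := by exact_mod_cast hpos
  have hle' : |n| ≤ 1 := by exact_mod_cast hle
  exact_mod_cast (by linarith [(abs_le.1 hle').2] : n = 1)

lemma eq_or_eq_neg_of_mem_span_pair {r r' : E} (hr : r ∈ Φ) (hr' : r' ∈ Φ)
    (horth : ⟪r, r'⟫_ℝ = 0) (hs : s ∈ Φ) (hspan : s ∈ Submodule.span ℝ {r, r'}) :
    s = r ∨ s = -r ∨ s = r' ∨ s = -r' := by
  by_contra! hne
  obtain ⟨a, b, rfl⟩ := Submodule.mem_span_pair.1 hspan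
  have h₁ := hΦ.abs_inner_le_one hs hr hne.1 hne.2.1
  have h₂ := hΦ.abs_inner_le_one hs hr' hne.2.2.1 hne.2.2.2
  have h₃ := hΦ.norm_two _ hs
  simp only [inner_add_left, inner_add_right, real_inner_smul_left, real_inner_smul_right,
    hΦ.norm_two r hr, hΦ.norm_two r' hr', horth, real_inner_comm r r'] at h₁ h₂ h₃
  rw [abs_le] at h₁ h₂
  nlinarith

end IsRootSystem

lemma sRefl_apply (α x : E) : sRefl α x = x - ⟪x, α⟫_ℝ • α := rfl

lemma inner_sRefl_left (α x y : E) : ⟪sRefl α x, y⟫_ℝ = ⟪x, sRefl α y⟫_ℝ := by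
  simp only [sRefl_apply, inner_sub_left, inner_sub_right, real_inner_smul_left,
    real_inner_smul_right, real_inner_comm α y]
  ring

lemma sRefl_eq_reflection (hα : ⟪α, α⟫_ℝ = 2) : sRefl α = ((ℝ ∙ α)ᗮ.reflection : E → E) := by
  funext x
  rw [Submodule.reflection_orthogonal_apply, Submodule.reflection_singleton_apply, sRefl_apply,
    RCLike.ofReal_real_eq_id, id, ← real_inner_self_eq_norm_sq, hα, real_inner_comm]
  module

lemma sRefl_sRefl (hα : ⟪α, α⟫_ℝ = 2) (x : E) : sRefl α (sRefl α x) = x := by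
  rw [sRefl_eq_reflection hα, Submodule.reflection_reflection]

lemma sRefl_self (hα : ⟪α, α⟫_ℝ = 2) : sRefl α α = -α := by
  rw [sRefl_eq_reflection hα, Submodule.reflection_orthogonalComplement_singleton_eq_neg]

lemma exists_linearIsometryEquiv_of_mem_weylGroup (hΦ : IsRootSystem Φ) {w : Function.End E}
    (hw : w ∈ WeylGroup Φ) :
    ∃ e : E ≃ₗᵢ[ℝ] E, ⇑e = w ∧ MapsTo e Φ Φ ∧ MapsTo e.symm Φ Φ := by
  induction hw using Submonoid.closure_induction with
  | mem _ h =>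
    obtain ⟨α, hα, rfl⟩ := h
    have he := sRefl_eq_reflection (hΦ.norm_two α hα)
    have hmaps : MapsTo (sRefl α) Φ Φ := fun δ hδ => hΦ.reflect_mem α hα δ hδ
    refine ⟨_, he.symm, ?_, ?_⟩
    · rwa [← he]
    · rwa [Submodule.reflection_symm, ← he]
  | one => exact ⟨LinearIsometryEquiv.refl ℝ E, rfl, mapsTo_id Φ, mapsTo_id Φ⟩
  | mul _ _ _ _ h₁ h₂ =>
    obtain ⟨e₁, rfl, h₁, h₁'⟩ := h₁
    obtain ⟨e₂, rfl, h₂, h₂'⟩ := h₂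
    exact ⟨e₂.trans e₁, rfl, h₁.comp h₂, h₂'.comp h₁'⟩

lemma sRefl_mem_weylGroup (hα : α ∈ Φ) : sRefl α ∈ WeylGroup Φ :=
  Submonoid.subset_closure ⟨α, hα, rfl⟩

section WeylGroupElement

variable (hΦ : IsRootSystem Φ) {w : Function.End E} (hw : w ∈ WeylGroup Φ)
include hΦ hw

lemma inner_apply_apply_of_mem_weylGroup (x y : E) : ⟪w x, w y⟫_ℝ = ⟪x, y⟫_ℝ := by
  obtain ⟨e, rfl, -⟩ := exists_linearIsometryEquiv_of_mem_weylGroup hΦ hw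
  exact e.inner_map_map x y

lemma apply_mem_of_mem_weylGroup (hδ : δ ∈ Φ) : w δ ∈ Φ := by
  obtain ⟨e, rfl, he, -⟩ := exists_linearIsometryEquiv_of_mem_weylGroup hΦ hw
  exact he hδ

end WeylGroupElement

def IsRegular (Φ : Set E) (v : E) : Prop :=
  ∀ δ ∈ Φ, ⟪v, δ⟫_ℝ ≠ 0

def IsIndecomposable (Φ : Set E) (v ρ : E) : Prop :=
  0 < ⟪v, ρ⟫_ℝ ∧ ∀ s ∈ Φ, ∀ t ∈ Φ, 0 < ⟪v, s⟫_ℝ → 0 < ⟪v, t⟫_ℝ → s + t ≠ ρ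

variable {v ρ : E}

lemma IsRegular.apply (hv : IsRegular Φ v) (hΦ : IsRootSystem Φ) {w : Function.End E}
    (hw : w ∈ WeylGroup Φ) : IsRegular Φ (w v) := by
  obtain ⟨e, rfl, -, he'⟩ := exists_linearIsometryEquiv_of_mem_weylGroup hΦ hw
  intro δ hδ
  rw [e.inner_map_eq_flip]
  exact hv _ (he' hδ)

lemma IsIndecomposable.apply (hρ : IsIndecomposable Φ v ρ) (hΦ : IsRootSystem Φ)
    {w : Function.End E} (hw : w ∈ WeylGroup Φ) : IsIndecomposable Φ (w v) (w ρ) := by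
  obtain ⟨e, rfl, -, he'⟩ := exists_linearIsometryEquiv_of_mem_weylGroup hΦ hw
  refine ⟨by rw [e.inner_map_map]; exact hρ.1, fun s hs t ht hvs hvt hst => ?_⟩
  rw [e.inner_map_eq_flip] at hvs hvt
  refine hρ.2 _ (he' hs) _ (he' ht) hvs hvt ?_
  rw [← map_add, hst, e.symm_apply_apply]

lemma isIndecomposable_of_forall_inner_pos {u : E} (hvρ : ⟪v, ρ⟫_ℝ = 2) (huρ : ⟪u, ρ⟫_ℝ = 0)
    (h : ∀ s ∈ Φ, 0 < ⟪v, s⟫_ℝ → ⟪v, s⟫_ℝ < 2 → 0 < ⟪u, s⟫_ℝ) : IsIndecomposable Φ v ρ := by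
  refine ⟨by rw [hvρ]; norm_num, fun s hs t ht hvs hvt hst => ?_⟩
  have hsum : ⟪v, s⟫_ℝ + ⟪v, t⟫_ℝ = 2 := by rw [← inner_add_right, hst, hvρ]
  have hus := h s hs hvs (by linarith)
  have hut := h t ht hvt (by linarith)
  have : ⟪u, s⟫_ℝ + ⟪u, t⟫_ℝ = 0 := by rw [← inner_add_right, hst, huρ]
  linarith

namespace Base

variable (B : Base Φ) {γ : E}

def posRoots : Set E := {δ ∈ Φ | ∀ γ ∈ B.Δ, 0 ≤ B.coeff δ γ}

def IsDominant (v : E) : Prop := ∀ γ ∈ B.Δ, 0 ≤ ⟪v, γ⟫_ℝ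

lemma coeff_eq_of_eq_sum (hδ : δ ∈ Φ) {c : E → ℝ} (h : δ = ∑ γ ∈ B.Δ, c γ • γ)
    (hγ : γ ∈ B.Δ) : (B.coeff δ γ : ℝ) = c γ :=
  linearIndepOn_finset_iffₛ.1 (show LinearIndepOn ℝ id (B.Δ : Set E) from B.indep)
    (fun γ => (B.coeff δ γ : ℝ)) c ((B.expand δ hδ).symm.trans h) γ hγ

open scoped Classical in
lemma coeff_of_mem (hα : α ∈ B.Δ) (hγ : γ ∈ B.Δ) : B.coeff α γ = if γ = α then 1 else 0 := by
  have h := B.coeff_eq_of_eq_sum (B.subset hα) (c := fun γ => if γ = α then 1 else 0)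
    (by simp [ite_smul, hα]) hγ
  split_ifs at h ⊢ <;> exact_mod_cast h

lemma coeff_sRefl_of_ne (hΦ : IsRootSystem Φ) (hα : α ∈ B.Δ) (hδ : δ ∈ Φ) (hγ : γ ∈ B.Δ)
    (hne : γ ≠ α) : B.coeff (sRefl α δ) γ = B.coeff δ γ := by
  classical
  have h := B.coeff_eq_of_eq_sum (hΦ.reflect_mem α (B.subset hα) δ hδ)
    (c := fun γ => B.coeff δ γ - if γ = α then ⟪δ, α⟫_ℝ else 0) ?_ hγ
  · rw [if_neg hne, sub_zero] at h
    exact_mod_cast h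
  · simp only [sub_smul, Finset.sum_sub_distrib, ite_smul, zero_smul, Finset.sum_ite_eq',
      if_pos hα, ← B.expand δ hδ]

lemma mem_posRoots_of_mem (hα : α ∈ B.Δ) : α ∈ B.posRoots :=
  ⟨B.subset hα, fun γ hγ => by rw [B.coeff_of_mem hα hγ]; split_ifs <;> norm_num⟩

lemma inner_eq_sum_coeff (v : E) (hδ : δ ∈ Φ) :
    ⟪v, δ⟫_ℝ = ∑ γ ∈ B.Δ, (B.coeff δ γ : ℝ) * ⟪v, γ⟫_ℝ := by
  conv_lhs => rw [B.expand δ hδ]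
  simp only [inner_sum, real_inner_smul_right]

variable {B}

lemma IsDominant.inner_nonneg {v : E} (hv : B.IsDominant v) (hδ : δ ∈ B.posRoots) :
    0 ≤ ⟪v, δ⟫_ℝ := by
  rw [B.inner_eq_sum_coeff v hδ.1]
  exact Finset.sum_nonneg fun γ hγ => mul_nonneg (by exact_mod_cast hδ.2 γ hγ) (hv γ hγ)

lemma IsDominant.mem_posRoots {v : E} (hv : B.IsDominant v) (hδ : δ ∈ Φ) (hpos : 0 < ⟪v, δ⟫_ℝ) :
    δ ∈ B.posRoots := by
  refine ⟨hδ, (B.sign δ hδ).resolve_right fun hneg => ?_⟩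
  rw [B.inner_eq_sum_coeff v hδ] at hpos
  have : ∑ γ ∈ B.Δ, (B.coeff δ γ : ℝ) * ⟪v, γ⟫_ℝ ≤ 0 := Finset.sum_nonpos fun γ hγ =>
    mul_nonpos_of_nonpos_of_nonneg (by exact_mod_cast hneg γ hγ) (hv γ hγ)
  linarith

section

variable (hΦ : IsRootSystem Φ)
include hΦ

lemma exists_coeff_pos_of_ne (hα : α ∈ B.Δ) (hδ : δ ∈ B.posRoots) (hne : δ ≠ α) :
    ∃ γ ∈ B.Δ, γ ≠ α ∧ 0 < B.coeff δ γ := by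
  by_contra! h
  have hδα : δ = (B.coeff δ α : ℝ) • α := by
    conv_lhs => rw [B.expand δ hδ.1]
    refine Finset.sum_eq_single_of_mem α hα fun γ hγ hγα => ?_
    rw [le_antisymm (h γ hγ hγα) (hδ.2 γ hγ), Int.cast_zero, zero_smul]
  rcases hΦ.reduced α (B.subset hα) _ (hδα ▸ hδ.1) with h1 | h1
  · exact hne (by rw [hδα, h1, one_smul])
  · have : (0 : ℝ) ≤ B.coeff δ α := by exact_mod_cast hδ.2 α hα
    linarith

lemma sRefl_mem_posRoots (hα : α ∈ B.Δ) (hδ : δ ∈ B.posRoots) (hne : δ ≠ α) :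
    sRefl α δ ∈ B.posRoots := by
  obtain ⟨γ, hγ, hγα, hpos⟩ := exists_coeff_pos_of_ne hΦ hα hδ hne
  have hmem : sRefl α δ ∈ Φ := hΦ.reflect_mem α (B.subset hα) δ hδ.1
  refine ⟨hmem, (B.sign _ hmem).resolve_right fun hneg => ?_⟩
  have := hneg γ hγ
  rw [B.coeff_sRefl_of_ne hΦ hα hδ.1 hγ hγα] at this
  omega

lemma sRefl_ne_of_mem_posRoots (hα : α ∈ B.Δ) (hδ : δ ∈ B.posRoots) (hne : δ ≠ α) :
    sRefl α δ ≠ α := by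
  obtain ⟨γ, hγ, hγα, hpos⟩ := exists_coeff_pos_of_ne hΦ hα hδ hne
  intro h
  rw [← B.coeff_sRefl_of_ne hΦ hα hδ.1 hγ hγα, h, B.coeff_of_mem hα hγ, if_neg hγα] at hpos
  exact hpos.false

lemma mem_of_forall_add_ne (hδ : δ ∈ B.posRoots)
    (h : ∀ s ∈ B.posRoots, ∀ t ∈ B.posRoots, s + t ≠ δ) : δ ∈ B.Δ := by
  by_contra hδΔ
  obtain ⟨γ, hγ, hpos⟩ : ∃ γ ∈ B.Δ, 0 < ⟪δ, γ⟫_ℝ := by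
    by_contra! hle
    have : ⟪δ, δ⟫_ℝ ≤ 0 := by
      rw [B.inner_eq_sum_coeff δ hδ.1]
      exact Finset.sum_nonpos fun γ hγ =>
        mul_nonpos_of_nonneg_of_nonpos (by exact_mod_cast hδ.2 γ hγ) (hle γ hγ)
    linarith [hΦ.norm_two δ hδ.1]
  have hne : δ ≠ γ := fun h => hδΔ (h ▸ hγ)
  have hone := hΦ.inner_eq_one_of_pos hδ.1 (B.subset hγ) hne hpos
  refine h γ (B.mem_posRoots_of_mem hγ) _ (sRefl_mem_posRoots hΦ hγ hδ hne) ?_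
  rw [sRefl_apply, hone, one_smul, add_sub_cancel]

lemma ncard_inner_sRefl_neg_lt (hα : α ∈ B.Δ) {v : E} (hvα : ⟪v, α⟫_ℝ < 0) :
    {δ ∈ B.posRoots | ⟪sRefl α v, δ⟫_ℝ < 0}.ncard < {δ ∈ B.posRoots | ⟪v, δ⟫_ℝ < 0}.ncard := by
  have hfin : {δ ∈ B.posRoots | ⟪v, δ⟫_ℝ < 0}.Finite := hΦ.finite.subset fun δ hδ => hδ.1.1
  have hαα := hΦ.norm_two α (B.subset hα)
  calc _ ≤ ({δ ∈ B.posRoots | ⟪v, δ⟫_ℝ < 0} \ {α}).ncard := by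
        refine ncard_le_ncard_of_injOn (sRefl α) (fun δ ⟨hδ, hvδ⟩ => ?_) ?_ hfin.sdiff
        · have hδα : δ ≠ α := by
            rintro rfl
            rw [inner_sRefl_left, sRefl_self hαα, inner_neg_right] at hvδ
            linarith
          refine ⟨⟨sRefl_mem_posRoots hΦ hα hδ hδα, ?_⟩, sRefl_ne_of_mem_posRoots hΦ hα hδ hδα⟩
          rwa [← inner_sRefl_left]
        · exact (Function.LeftInverse.injective (sRefl_sRefl hαα)).injOn
    _ < _ := ncard_sdiff_singleton_lt_of_mem ⟨B.mem_posRoots_of_mem hα, hvα⟩ hfin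

variable (B) in
theorem exists_mem_weylGroup_isDominant (v : E) : ∃ w ∈ WeylGroup Φ, B.IsDominant (w v) := by
  induction hn : {δ ∈ B.posRoots | ⟪v, δ⟫_ℝ < 0}.ncard using Nat.strong_induction_on
    generalizing v with
  | _ n ih =>
    by_cases hv : B.IsDominant v
    · exact ⟨1, one_mem _, hv⟩
    obtain ⟨α, hα, hvα⟩ : ∃ α ∈ B.Δ, ⟪v, α⟫_ℝ < 0 := by
      simpa [IsDominant] using hv
    obtain ⟨w, hw, hwv⟩ := ih _ (hn ▸ ncard_inner_sRefl_neg_lt hΦ hα hvα) (sRefl α v) rfl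
    exact ⟨w * sRefl α, mul_mem hw (sRefl_mem_weylGroup (B.subset hα)), hwv⟩

lemma mem_of_isIndecomposable {v : E} (hv : B.IsDominant v) (hreg : IsRegular Φ v)
    (hδ : δ ∈ Φ) (hind : IsIndecomposable Φ v δ) : δ ∈ B.Δ := by
  have hpos : ∀ s ∈ B.posRoots, 0 < ⟪v, s⟫_ℝ := fun s hs =>
    (hv.inner_nonneg hs).lt_of_ne' (hreg s hs.1)
  exact mem_of_forall_add_ne hΦ (hv.mem_posRoots hδ hind.1) fun s hs t ht =>
    hind.2 s hs.1 t ht.1 (hpos s hs) (hpos t ht)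

end

end Base

lemma exists_mem_orthogonal_forall_inner_ne_zero {S : Set E} (hS : S.Finite)
    (K : Submodule ℝ E) [K.HasOrthogonalProjection] :
    ∃ u ∈ Kᗮ, ∀ s ∈ S, s ∉ K → ⟪u, s⟫_ℝ ≠ 0 := by
  have : Finite {s // s ∈ S ∧ s ∉ K} := (hS.subset fun _ h => h.1).to_subtype
  obtain ⟨u, hu, hne⟩ := Module.Dual.exists_forall_mem_ne_zero_of_forall_exists Kᗮ
    (fun s : {s // s ∈ S ∧ s ∉ K} => innerₗ E s.1) fun s => by
      by_contra! h
      exact s.2.2 <| K.orthogonal_orthogonal.le <| (Submodule.mem_orthogonal _ _).2 fun u hu => by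
        simpa [real_inner_comm] using h u hu
  exact ⟨u, hu, fun s hs hsK => by simpa [real_inner_comm] using hne ⟨s, hs, hsK⟩⟩

lemma add_mul_ne_zero_and_pos_iff {a b M : ℝ} (h : |a| < M * |b|) :
    a + M * b ≠ 0 ∧ (0 < a + M * b ↔ 0 < b) := by
  have ha := neg_abs_le a
  have ha' := le_abs_self a
  rcases le_or_gt 0 b with hb | hb
  · rw [abs_of_nonneg hb] at h
    have hb' : 0 < b := hb.lt_of_ne (by rintro rfl; rw [mul_zero] at h; linarith)
    have hpos : 0 < a + M * b := by linarith
    exact ⟨hpos.ne', iff_of_true hpos hb'⟩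
  · rw [abs_of_neg hb] at h
    have hneg : a + M * b < 0 := by linarith
    exact ⟨hneg.ne, iff_of_false hneg.not_gt hb.not_gt⟩

lemma exists_isRegular_add_smul (hfin : Φ.Finite) {x u : E}
    (hx : ∀ s ∈ Φ, ⟪u, s⟫_ℝ = 0 → |⟪x, s⟫_ℝ| = 2) :
    ∃ M : ℝ, IsRegular Φ (x + M • u) ∧
      ∀ s ∈ Φ, 0 < ⟪x + M • u, s⟫_ℝ → ⟪x + M • u, s⟫_ℝ < 2 → 0 < ⟪u, s⟫_ℝ := by
  obtain ⟨M, hM⟩ : ∃ M : ℝ, ∀ s ∈ Φ, ⟪u, s⟫_ℝ ≠ 0 → |⟪x, s⟫_ℝ| < M * |⟪u, s⟫_ℝ| := by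
    refine ((Filter.eventually_all_finite hfin).2 fun s _ => ?_).exists (f := Filter.atTop)
    by_cases hs : ⟪u, s⟫_ℝ = 0
    · exact Filter.Eventually.of_forall fun _ h => absurd hs h
    · exact ((Filter.tendsto_id.atTop_mul_const (abs_pos.2 hs)).eventually_gt_atTop _).mono
        fun _ h _ => h
  have hinner : ∀ s, ⟪x + M • u, s⟫_ℝ = ⟪x, s⟫_ℝ + M * ⟪u, s⟫_ℝ := fun s => by
    rw [inner_add_left, real_inner_smul_left]
  have habs : ∀ s ∈ Φ, ⟪u, s⟫_ℝ = 0 → |⟪x + M • u, s⟫_ℝ| = 2 := fun s hs hus => by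
    rw [hinner, hus, mul_zero, add_zero]
    exact hx s hs hus
  refine ⟨M, fun s hs => ?_, fun s hs hpos hlt => ?_⟩ <;> by_cases hus : ⟪u, s⟫_ℝ = 0
  · intro h
    simpa [h] using habs s hs hus
  · rw [hinner]
    exact (add_mul_ne_zero_and_pos_iff (hM s hs hus)).1
  · have := habs s hs hus
    rw [abs_of_pos hpos] at this
    linarith
  · rw [hinner] at hpos
    exact (add_mul_ne_zero_and_pos_iff (hM s hs hus)).2.1 hpos

section OrthogonalPair

variable (hΦ : IsRootSystem Φ) {r r' : E} (hr : r ∈ Φ) (hr' : r' ∈ Φ) (horth : ⟪r, r'⟫_ℝ = 0)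
include hΦ hr hr' horth

lemma exists_inner_eq_zero_abs_inner_add_eq_two :
    ∃ u : E, ⟪u, r⟫_ℝ = 0 ∧ ⟪u, r'⟫_ℝ = 0 ∧ ∀ s ∈ Φ, ⟪u, s⟫_ℝ = 0 → |⟪r + r', s⟫_ℝ| = 2 := by
  have : FiniteDimensional ℝ (Submodule.span ℝ {r, r'}) :=
    FiniteDimensional.span_of_finite ℝ (Set.toFinite _)
  obtain ⟨u, hu, hgen⟩ :=
    exists_mem_orthogonal_forall_inner_ne_zero hΦ.finite (Submodule.span ℝ {r, r'})
  refine ⟨u, Submodule.inner_left_of_mem_orthogonal (Submodule.subset_span (by simp)) hu,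
    Submodule.inner_left_of_mem_orthogonal (Submodule.subset_span (by simp)) hu,
    fun s hs hus => ?_⟩
  have hspan : s ∈ Submodule.span ℝ {r, r'} := by
    by_contra h
    exact hgen s hs h hus
  rcases hΦ.eq_or_eq_neg_of_mem_span_pair hr hr' horth hs hspan with h | h | h | h <;>
    simp only [h, inner_add_left, inner_neg_right, hΦ.norm_two _ hr, hΦ.norm_two _ hr', horth,
      real_inner_comm r r'] <;> norm_num

theorem exists_isRegular_isIndecomposable :
    ∃ v : E, IsRegular Φ v ∧ IsIndecomposable Φ v r ∧ IsIndecomposable Φ v r' := by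
  obtain ⟨u, hur, hur', hu⟩ := exists_inner_eq_zero_abs_inner_add_eq_two hΦ hr hr' horth
  obtain ⟨M, hreg, hpos⟩ := exists_isRegular_add_smul hΦ.finite hu
  refine ⟨_, hreg, isIndecomposable_of_forall_inner_pos ?_ hur hpos,
    isIndecomposable_of_forall_inner_pos ?_ hur' hpos⟩ <;>
    simp only [inner_add_left, real_inner_smul_left, hur, hur', hΦ.norm_two _ hr,
      hΦ.norm_two _ hr', horth, real_inner_comm r r'] <;> norm_num

end OrthogonalPair

/-- Any pair of orthogonal roots in a simply-laced root system is Weyl-conjugate to a pair of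
orthogonal simple roots. -/
theorem orthogonal_pair_conj_to_simple_pair
    (hΦ : IsRootSystem Φ) (B : Base Φ)
    {r r' : E} (hr : r ∈ Φ) (hr' : r' ∈ Φ) (horth : ⟪r, r'⟫_ℝ = 0) :
    ∃ w ∈ WeylGroup Φ, ∃ α ∈ B.Δ, ∃ α' ∈ B.Δ,
      ⟪α, α'⟫_ℝ = 0 ∧ w r = α ∧ w r' = α' := by
  obtain ⟨v, hreg, hr_ind, hr'_ind⟩ := exists_isRegular_isIndecomposable hΦ hr hr' horth
  obtain ⟨w, hw, hdom⟩ := B.exists_mem_weylGroup_isDominant hΦ v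
  have hreg' := hreg.apply hΦ hw
  refine ⟨w, hw,
    w r, Base.mem_of_isIndecomposable hΦ hdom hreg' (apply_mem_of_mem_weylGroup hΦ hw hr)
      (hr_ind.apply hΦ hw),
    w r', Base.mem_of_isIndecomposable hΦ hdom hreg' (apply_mem_of_mem_weylGroup hΦ hw hr')
      (hr'_ind.apply hΦ hw),
    ?_, rfl, rfl⟩
  rw [inner_apply_apply_of_mem_weylGroup hΦ hw, horth]

end PaperRS
end

section
/- Let n ≥ 3 and consider the type A_n root system with simple roots α_m = e_m − e_{m+1} (1 ≤ m ≤ n). Fix k with 2 ≤ k ≤ n−1 and let α = α_k. Then the set Φ_α of roots ε that are orthogonal to α and have α-coefficient 1 in the simple-root expansion equals {e_i − e_j : 1 ≤ i < k and k+1 < j ≤ n+1}, and the subgroup of S_{n+1} consisting of permutations that fix both k and k+1 and preserve the set {1,…,k} (the stabilizer of α in the Weyl group of the Levi generated by the simple roots other than α) acts transitively on Φ_α. (Paper's Lemma for type A_n and a non-extremal simple root.) -/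
/-!
The `α_a`-coefficient of `v = ∑ c_m α_m` is the partial sum `∑_{t ≤ a} v t`, since each
`α_m = e_m - e_{m+1}` contributes to it exactly when `m = a`. For a root `e_i - e_j` this partial
sum is `1` precisely when `i ≤ a < j`, and orthogonality to `α_a` then rules out `i = a` and
`j = a + 1`. Two roots `e_i - e_j`, `e_{i'} - e_{j'}` of this shape are exchanged by `(i i')(j j')`,
which fixes `a`, `a + 1` and preserves `{0, …, a}`.
-/

namespace PaperA

/-- The root system of type `A_n`, realized inside `ℝ^{n+1}` (with its standard basis and
dot product) as the set of vectors `e_i - e_j` for `i ≠ j`. -/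
def aRoots (n : ℕ) : Set (Fin (n + 1) → ℝ) :=
  {v | ∃ i j : Fin (n + 1), i ≠ j ∧ v = Pi.single i (1 : ℝ) - Pi.single j (1 : ℝ)}

/-- The `m`-th simple root of type `A_n` (0-indexed: `sroot n m = e_{m+1} - e_{m+2}` in
1-based notation, i.e. the simple root `α_{m+1}`). -/
def sroot (n : ℕ) (m : Fin n) : Fin (n + 1) → ℝ :=
  Pi.single m.castSucc (1 : ℝ) - Pi.single m.succ (1 : ℝ)

variable {n : ℕ}

lemma sum_mul_sroot (v : Fin (n + 1) → ℝ) (m : Fin n) :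
    ∑ t, v t * sroot n m t = v m.castSucc - v m.succ := by
  simp [sroot, mul_sub, Finset.sum_sub_distrib, Pi.single_apply]

lemma sum_filter_le_single (a : Fin (n + 1)) (s : ℕ) :
    ∑ t with t.val ≤ s, Pi.single a (1 : ℝ) t = if a.val ≤ s then 1 else 0 := by
  simp

lemma sum_filter_le_sum_smul_sroot (c : Fin n → ℝ) (s : Fin n) :
    ∑ t with t.val ≤ s.val, (∑ m, c m • sroot n m) t = c s := by
  have hsroot : ∀ m : Fin n, ∑ t with t.val ≤ s.val, sroot n m t = if m = s then 1 else 0 := by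
    intro m
    simp only [sroot, Pi.sub_apply, Finset.sum_sub_distrib, sum_filter_le_single,
      Fin.val_castSucc, Fin.val_succ, Fin.ext_iff]
    split_ifs <;> norm_num <;> omega
  simp only [Finset.sum_apply, Pi.smul_apply, smul_eq_mul]
  rw [Finset.sum_comm]
  simp [← Finset.mul_sum, hsroot]

lemma single_sub_single_eq_sum_sroot {i j : Fin (n + 1)} (hij : i ≤ j) :
    Pi.single i (1 : ℝ) - Pi.single j 1 =
      ∑ m : Fin n, ((if i.val ≤ m.val ∧ m.val < j.val then 1 else 0 : ℤ) : ℝ) • sroot n m := by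
  -- `f m = -e_m`, so that `α_m = f (m + 1) - f m` telescopes
  set f : ℕ → Fin (n + 1) → ℝ := fun m t => if t.val = m then -1 else 0
  have hf : ∀ m : Fin n, sroot n m = f (m + 1) - f m := by
    intro m; funext t
    simp only [sroot, Pi.sub_apply, Pi.single_apply, Fin.ext_iff, Fin.val_castSucc, Fin.val_succ, f]
    split_ifs <;> norm_num
  have hsingle : ∀ a : Fin (n + 1), Pi.single a (1 : ℝ) = - f a := by
    intro a; funext t
    simp only [Pi.single_apply, Fin.ext_iff, Pi.neg_apply, f]
    split_ifs <;> norm_num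
  have hIco : (Finset.range n).filter (fun m => i.val ≤ m ∧ m < j.val) =
      Finset.Ico i.val j.val := by
    ext m
    simp only [Finset.mem_filter, Finset.mem_range, Finset.mem_Ico]
    omega
  calc Pi.single i (1 : ℝ) - Pi.single j 1
        = ∑ m ∈ Finset.Ico i.val j.val, (f (m + 1) - f m) := by
        rw [Finset.sum_Ico_sub f (Fin.le_iff_val_le_val.mp hij), hsingle, hsingle]; abel
    _ = _ := by
        rw [← hIco, Finset.sum_filter, ← Fin.sum_univ_eq_sum_range]
        refine Finset.sum_congr rfl fun m _ => ?_
        split_ifs <;> simp [hf]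

lemma exists_coeff_eq_one_iff (i j : Fin (n + 1)) (a : Fin n) :
    (∃ c : Fin n → ℤ, Pi.single i (1 : ℝ) - Pi.single j 1 = ∑ m, (c m : ℝ) • sroot n m ∧
      c a = 1) ↔ i.val ≤ a.val ∧ a.val < j.val := by
  constructor
  · rintro ⟨c, hc, hca⟩
    have h := sum_filter_le_sum_smul_sroot (fun m => (c m : ℝ)) a
    simp only [← hc, hca, Pi.sub_apply, Finset.sum_sub_distrib, sum_filter_le_single] at h
    split_ifs at h <;> norm_num at h
    omega
  · rintro ⟨hi, hj⟩
    refine ⟨_, single_sub_single_eq_sum_sroot (Fin.le_iff_val_le_val.mpr (by omega)), ?_⟩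
    simp [hi, hj]

lemma sum_mul_sroot_eq_zero_iff {i j : Fin (n + 1)} {a : Fin n} (hi : i.val ≤ a.val)
    (hj : a.val < j.val) :
    ∑ t, (Pi.single i (1 : ℝ) - Pi.single j 1 : Fin (n + 1) → ℝ) t * sroot n a t = 0 ↔
      i.val < a.val ∧ a.val + 1 < j.val := by
  simp only [sum_mul_sroot, Pi.sub_apply, Pi.single_apply, Fin.ext_iff, Fin.val_castSucc,
    Fin.val_succ]
  split_ifs <;> norm_num <;> omega

/-- `Φ_α` for `α = sroot n a`, the paper's `α_{a+1}`. -/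
def phiSet (n : ℕ) (a : Fin n) : Set (Fin (n + 1) → ℝ) :=
  {v | v ∈ aRoots n ∧ ∑ t, v t * sroot n a t = 0 ∧
    ∃ c : Fin n → ℤ, v = ∑ m, (c m : ℝ) • sroot n m ∧ c a = 1}

theorem phiSet_eq (a : Fin n) :
    phiSet n a = {v | ∃ i j : Fin (n + 1), i.val < a.val ∧ a.val + 1 < j.val ∧
      v = Pi.single i (1 : ℝ) - Pi.single j 1} := by
  ext v
  constructor
  · rintro ⟨⟨i, j, -, rfl⟩, horth, hcoeff⟩
    obtain ⟨hi, hj⟩ := (exists_coeff_eq_one_iff i j a).mp hcoeff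
    obtain ⟨hi', hj'⟩ := (sum_mul_sroot_eq_zero_iff hi hj).mp horth
    exact ⟨i, j, hi', hj', rfl⟩
  · rintro ⟨i, j, hi, hj, rfl⟩
    exact ⟨⟨i, j, Fin.ne_of_val_ne (by omega), rfl⟩,
      (sum_mul_sroot_eq_zero_iff hi.le (by omega)).mpr ⟨hi, hj⟩,
      (exists_coeff_eq_one_iff i j a).mpr ⟨hi.le, by omega⟩⟩

theorem _root_.Equiv.Perm.exists_apply_eq_and_mapsTo_of_disjoint {α : Type*} [DecidableEq α]
    {S T : Set α} (hST : Disjoint S T) {i i' j j' : α} (hi : i ∈ S) (hi' : i' ∈ S)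
    (hj : j ∈ T) (hj' : j' ∈ T) :
    ∃ σ : Equiv.Perm α, σ i = i' ∧ σ j = j' ∧ (∀ x ∉ S ∪ T, σ x = x) ∧ Set.MapsTo σ S S := by
  refine ⟨Equiv.swap i i' * Equiv.swap j j', ?_, ?_, ?_, ?_⟩
  · simp [Equiv.swap_apply_of_ne_of_ne (hST.ne_of_mem hi hj) (hST.ne_of_mem hi hj')]
  · simp [Equiv.swap_apply_of_ne_of_ne (hST.ne_of_mem hi hj').symm (hST.ne_of_mem hi' hj').symm]
  · intro x hx
    simp only [Set.mem_union, not_or] at hx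
    rw [Equiv.Perm.mul_apply,
      Equiv.swap_apply_of_ne_of_ne (ne_of_mem_of_not_mem hj hx.2).symm
        (ne_of_mem_of_not_mem hj' hx.2).symm,
      Equiv.swap_apply_of_ne_of_ne (ne_of_mem_of_not_mem hi hx.1).symm
        (ne_of_mem_of_not_mem hi' hx.1).symm]
  · intro x hx
    rw [Equiv.Perm.mul_apply,
      Equiv.swap_apply_of_ne_of_ne (hST.ne_of_mem hx hj) (hST.ne_of_mem hx hj'),
      Equiv.swap_apply_def]
    split_ifs <;> assumption

lemma single_sub_single_comp_perm_inv (σ : Equiv.Perm (Fin (n + 1))) (i j : Fin (n + 1)) :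
    (fun t => (Pi.single i (1 : ℝ) - Pi.single j 1 : Fin (n + 1) → ℝ) (σ⁻¹ t)) =
      Pi.single (σ i) 1 - Pi.single (σ j) 1 := by
  funext t
  simp only [Pi.sub_apply, Pi.single_apply, Equiv.Perm.inv_def, Equiv.symm_apply_eq,
    @eq_comm _ t]

/-- For the simple root `α = α_k` of `A_n` (`n ≥ 3`, `2 ≤ k ≤ n-1`, 1-based indexing):
the set `Φ_α` of roots orthogonal to `α` with `α`-coefficient `1` equals
`{e_i - e_j : 1 ≤ i < k, k+1 < j ≤ n+1}` (i.e., 0-based, `i + 2 ≤ k` and `k + 1 ≤ j`), and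
the subgroup of `S_{n+1}` of permutations fixing `k` and `k+1` and preserving `{1, …, k}`
(the stabilizer of `α` in the Weyl group of the Levi) acts transitively on `Φ_α`. -/
theorem stabilizer_transitive_on_PhiSet_A (n k : ℕ)
    (hk2 : 2 ≤ k) (hkn : k ≤ n - 1)
    (α : Fin (n + 1) → ℝ) (hα : α = sroot n ⟨k - 1, by omega⟩)
    (Φα : Set (Fin (n + 1) → ℝ))
    (hΦα : Φα = {v | v ∈ aRoots n ∧ (∑ i, v i * α i) = 0 ∧
        ∃ c : Fin n → ℤ, v = (∑ m, (c m : ℝ) • sroot n m) ∧ c ⟨k - 1, by omega⟩ = 1})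
    (Stab : Set (Equiv.Perm (Fin (n + 1))))
    (hStab : Stab = {σ | σ ⟨k - 1, by omega⟩ = ⟨k - 1, by omega⟩ ∧
        σ ⟨k, by omega⟩ = ⟨k, by omega⟩ ∧
        ∀ i : Fin (n + 1), i.val < k → (σ i).val < k}) :
    Φα = {v | ∃ i j : Fin (n + 1), i.val + 2 ≤ k ∧ k + 1 ≤ j.val ∧
        v = Pi.single i (1 : ℝ) - Pi.single j (1 : ℝ)} ∧
    ∀ u ∈ Φα, ∀ v ∈ Φα, ∃ σ ∈ Stab, (fun i => u (σ⁻¹ i)) = v := by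
  have hΦ : Φα = {v | ∃ i j : Fin (n + 1), i.val + 2 ≤ k ∧ k + 1 ≤ j.val ∧
      v = Pi.single i (1 : ℝ) - Pi.single j (1 : ℝ)} := by
    rw [hΦα, hα, ← phiSet, phiSet_eq]
    ext v
    simp only [Set.mem_ofPred_eq]
    exact exists₂_congr fun i j => and_congr (by omega) (and_congr (by omega) Iff.rfl)
  refine ⟨hΦ, ?_⟩
  rintro _ hu _ hv
  rw [hΦ] at hu hv
  obtain ⟨i, j, hi, hj, rfl⟩ := hu
  obtain ⟨i', j', hi', hj', rfl⟩ := hv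
  obtain ⟨σ, hσi, hσj, hσfix, hσS⟩ :=
    Equiv.Perm.exists_apply_eq_and_mapsTo_of_disjoint (S := {x : Fin (n + 1) | x.val + 2 ≤ k})
      (T := {x | k + 1 ≤ x.val})
      (Set.disjoint_left.mpr fun x hx hx' => by simp only [Set.mem_ofPred_eq] at hx hx'; omega)
      hi hi' hj hj'
  refine ⟨σ, ?_, by rw [single_sub_single_comp_perm_inv, hσi, hσj]⟩
  rw [hStab]
  have hσfix' : ∀ x : Fin (n + 1), x.val = k - 1 ∨ x.val = k → σ x = x := fun x hx =>
    hσfix x (by simp only [Set.mem_union, Set.mem_ofPred_eq]; omega)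
  refine ⟨hσfix' _ (Or.inl rfl), hσfix' _ (Or.inr rfl), fun x hx => ?_⟩
  by_cases hxS : x.val + 2 ≤ k
  · exact (Nat.lt_add_of_pos_right two_pos).trans_le (hσS hxS)
  · rwa [hσfix' x (by omega)]

end PaperA
end

section
/- Let Φ be an irreducible reduced crystallographic simply-laced root system with base Δ and highest root θ; let α ∈ Δ be an extreme Heisenberg root with neighbour β, and set δ := θ − α − β. If λ is a root with c_α(λ) = 0 and ⟨λ,α⟩ ≠ 0 such that δ + λ ∈ Ψ_α (i.e. δ + λ is a root with c_α(δ+λ) = 1 and ⟨δ+λ, α⟩ ≤ 0), then λ = β. -/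
/-!
Since `α` is Heisenberg, `θ` is the only root with `α`-coefficient `2`. Reflecting `θ` in a simple
root `γ ≠ α` preserves that coefficient, so `θ ⟂ γ`, and expanding `⟪θ, θ⟫ = 2` in the base gives
`⟪θ, α⟫ = 1`. Together with `⟪β, α⟫ = -1` this makes `⟪θ - α - β + λ, α⟫ = ⟪λ, α⟫`, which is `-1`
because `λ ≠ ±α`. Hence reflecting `θ - α - β + λ` in `α` gives the root `θ - β + λ`, whose
`α`-coefficient is `2`; so it is `θ`, and `λ = β`.
-/

open scoped InnerProductSpace

namespace PaperRS

variable {E : Type*} [NormedAddCommGroup E] [InnerProductSpace ℝ E]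

variable {Φ : Set E}

/-- `⟪a ∓ b, a ∓ b⟫ = 4 ∓ 2 ⟪a, b⟫` is positive unless `a = ±b`. -/
lemma IsRootSystem.inner_eq_neg_one_or_zero_or_one (hΦ : IsRootSystem Φ) {a b : E}
    (ha : a ∈ Φ) (hb : b ∈ Φ) (hab : a ≠ b) (hab' : a ≠ -b) :
    ⟪a, b⟫_ℝ = -1 ∨ ⟪a, b⟫_ℝ = 0 ∨ ⟪a, b⟫_ℝ = 1 := by
  obtain ⟨n, hn⟩ := hΦ.cartan_int a ha b hb
  have hsub : 0 < ⟪a - b, a - b⟫_ℝ := real_inner_self_pos.mpr (sub_ne_zero.mpr hab)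
  have hadd : 0 < ⟪a + b, a + b⟫_ℝ :=
    real_inner_self_pos.mpr fun h => hab' (eq_neg_of_add_eq_zero_left h)
  simp only [inner_sub_left, inner_sub_right, inner_add_left, inner_add_right,
    real_inner_comm a b, hΦ.norm_two a ha, hΦ.norm_two b hb, hn] at hsub hadd
  have hlo : -2 < n := by exact_mod_cast (by linarith : (-2 : ℝ) < n)
  have hhi : n < 2 := by exact_mod_cast (by linarith : (n : ℝ) < 2)
  rw [hn]
  interval_cases n <;> norm_num

namespace Base

variable (B : Base Φ)

lemma coeff_eq_of_eq_sum_s11 {v : E} (hv : v ∈ Φ) {d : E → ℝ} (h : v = ∑ γ ∈ B.Δ, d γ • γ)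
    {σ : E} (hσ : σ ∈ B.Δ) : (B.coeff v σ : ℝ) = d σ := by
  have hz : ∑ γ : B.Δ, ((B.coeff v γ : ℝ) - d γ) • (γ : E) = 0 := by
    rw [Finset.sum_coe_sort B.Δ (fun γ => ((B.coeff v γ : ℝ) - d γ) • γ)]
    simp only [sub_smul, Finset.sum_sub_distrib, ← B.expand v hv, ← h, sub_self]
  exact sub_eq_zero.mp (Fintype.linearIndependent_iff.mp B.indep _ hz ⟨σ, hσ⟩)

open Classical in
lemma coeff_simple {γ σ : E} (hγ : γ ∈ B.Δ) (hσ : σ ∈ B.Δ) :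
    B.coeff γ σ = if σ = γ then 1 else 0 := by
  have h := B.coeff_eq_of_eq_sum_s11 (B.subset hγ) (d := fun τ => if τ = γ then 1 else 0)
    (by simp [ite_smul, hγ]) hσ
  split_ifs at h ⊢ <;> exact_mod_cast h

lemma coeff_neg {v : E} (hv : v ∈ Φ) (hv' : -v ∈ Φ) {σ : E} (hσ : σ ∈ B.Δ) :
    B.coeff (-v) σ = -B.coeff v σ := by
  have h := B.coeff_eq_of_eq_sum_s11 hv' (d := fun τ => -(B.coeff v τ : ℝ))
    (by simp only [neg_smul, Finset.sum_neg_distrib, ← B.expand v hv]) hσ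
  exact_mod_cast h

open Classical in
lemma coeff_sub_smul {v γ : E} {c : ℝ} (hv : v ∈ Φ) (hγ : γ ∈ B.Δ) (hw : v - c • γ ∈ Φ)
    {σ : E} (hσ : σ ∈ B.Δ) :
    (B.coeff (v - c • γ) σ : ℝ) = B.coeff v σ - if σ = γ then c else 0 := by
  refine B.coeff_eq_of_eq_sum_s11 hw
    (d := fun τ => (B.coeff v τ : ℝ) - if τ = γ then c else 0) ?_ hσ
  simp only [sub_smul, Finset.sum_sub_distrib, ← B.expand v hv, ite_smul, zero_smul,
    Finset.sum_ite_eq', hγ, if_true]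

/-- If `⟪β, α⟫ = 1`, then `β - α` would be a root with coefficients of both signs. -/
lemma inner_simple_eq_neg_one (hΦ : IsRootSystem Φ) {α β : E} (hα : α ∈ B.Δ) (hβ : β ∈ B.Δ)
    (hne : β ≠ α) (h0 : ⟪β, α⟫_ℝ ≠ 0) : ⟪β, α⟫_ℝ = -1 := by
  have hαΦ := B.subset hα
  have hβΦ := B.subset hβ
  have hneg : β ≠ -α := by
    intro h
    have hc := B.coeff_neg hαΦ (h ▸ hβΦ) hα
    rw [← h, B.coeff_simple hβ hα, B.coeff_simple hα hα, if_neg hne.symm] at hc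
    simp at hc
  rcases hΦ.inner_eq_neg_one_or_zero_or_one hβΦ hαΦ hne hneg with h | h | h
  · exact h
  · exact absurd h h0
  · have hr := hΦ.reflect_mem α hαΦ β hβΦ
    set r := β - ⟪β, α⟫_ℝ • α
    have cα : (B.coeff r α : ℝ) = -1 := by
      rw [B.coeff_sub_smul hβΦ hα hr hα, B.coeff_simple hβ hα, if_neg hne.symm, if_pos rfl, h]
      norm_num
    have cβ : (B.coeff r β : ℝ) = 1 := by
      rw [B.coeff_sub_smul hβΦ hα hr hβ, B.coeff_simple hβ hβ, if_pos rfl, if_neg hne]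
      norm_num
    rcases B.sign r hr with hs | hs
    · have := hs α hα
      exact absurd cα (by exact_mod_cast (by omega : B.coeff r α ≠ -1))
    · have := hs β hβ
      exact absurd cβ (by exact_mod_cast (by omega : B.coeff r β ≠ 1))

end Base

namespace IsHeisenberg

variable {B : Base Φ} {θ α : E}

lemma eq_of_coeff_eq_two (hH : IsHeisenberg B θ α) (hθ : θ ∈ Φ)
    (hα : α ∈ B.Δ) {δ : E} (hδ : δ ∈ Φ) (h2 : B.coeff δ α = 2) : δ = θ := by
  by_contra hne
  by_cases hneg : δ = -θ
  · have hc := B.coeff_neg hθ (hneg ▸ hδ) hα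
    rw [← hneg, h2, hH.1] at hc
    norm_num at hc
  · rcases hH.2 δ hδ hne hneg with h | h | h <;> omega

lemma inner_eq_zero (hH : IsHeisenberg B θ α) (hΦ : IsRootSystem Φ) (hθ : θ ∈ Φ)
    (hα : α ∈ B.Δ) {γ : E} (hγ : γ ∈ B.Δ) (hγα : γ ≠ α) : ⟪θ, γ⟫_ℝ = 0 := by
  have hγΦ := B.subset hγ
  have hr := hΦ.reflect_mem γ hγΦ θ hθ
  have hc := B.coeff_sub_smul hθ hγ hr hα
  rw [if_neg hγα.symm, sub_zero, hH.1] at hc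
  have heq := hH.eq_of_coeff_eq_two hθ hα hr (by exact_mod_cast hc)
  rcases smul_eq_zero.mp (sub_eq_self.mp heq) with h | h
  · exact h
  · exact absurd (h ▸ hγΦ) hΦ.nonzero

lemma inner_eq_one (hH : IsHeisenberg B θ α) (hΦ : IsRootSystem Φ) (hθ : θ ∈ Φ)
    (hα : α ∈ B.Δ) : ⟪θ, α⟫_ℝ = 1 := by
  have h2 : (2 : ℝ) = 2 * ⟪θ, α⟫_ℝ :=
    calc (2 : ℝ) = ⟪θ, ∑ γ ∈ B.Δ, (B.coeff θ γ : ℝ) • γ⟫_ℝ := by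
          rw [← B.expand θ hθ, hΦ.norm_two θ hθ]
      _ = ∑ γ ∈ B.Δ, (B.coeff θ γ : ℝ) * ⟪θ, γ⟫_ℝ := by
          simp only [inner_sum, real_inner_smul_right]
      _ = 2 * ⟪θ, α⟫_ℝ := by
          rw [Finset.sum_eq_single α
            (fun γ hγ hγα => by rw [hH.inner_eq_zero hΦ hθ hα hγ hγα, mul_zero])
            (absurd hα), hH.1]
          norm_num
  linarith

end IsHeisenberg

theorem lam_eq_beta_of_delta_add_mem_psiSet_general
    (hΦ : IsRootSystem Φ) (B : Base Φ)
    {θ α β : E} (hθ : IsHighest B θ) (hα : α ∈ B.Δ)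
    (hext : IsExtreme B α β) (hH : IsHeisenberg B θ α)
    {l : E} (hl : l ∈ Φ) (hc : B.coeff l α = 0) (hne : ⟪l, α⟫_ℝ ≠ 0)
    (hmem : θ - α - β + l ∈ PsiSet B α) :
    l = β := by
  obtain ⟨hμ, hμc, hμα⟩ := hmem
  have hαΦ := B.subset hα
  have hβα := B.inner_simple_eq_neg_one hΦ hα hext.1 hext.2.1
    (by rw [real_inner_comm]; exact hext.2.2.1)
  have hμl : ⟪θ - α - β + l, α⟫_ℝ = ⟪l, α⟫_ℝ := by
    simp only [inner_add_left, inner_sub_left, hH.inner_eq_one hΦ hθ.1 hα, hβα,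
      hΦ.norm_two α hαΦ]
    ring
  have hlα : ⟪l, α⟫_ℝ = -1 := by
    have hl₁ : l ≠ α := by rintro rfl; simp [B.coeff_simple hα hα] at hc
    have hl₂ : l ≠ -α := by
      rintro rfl; simp [B.coeff_neg hαΦ hl hα, B.coeff_simple hα hα] at hc
    rcases hΦ.inner_eq_neg_one_or_zero_or_one hl hαΦ hl₁ hl₂ with h | h | h
    · exact h
    · exact absurd h hne
    · linarith
  have hr := hΦ.reflect_mem α hαΦ _ hμ
  set r := θ - α - β + l - ⟪θ - α - β + l, α⟫_ℝ • α with hr_def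
  have hc2 : (B.coeff r α : ℝ) = 2 := by
    rw [B.coeff_sub_smul hμ hα hr hα, if_pos rfl, hμc, hμl, hlα]
    norm_num
  have hrθ := hH.eq_of_coeff_eq_two hθ.1 hα hr (by exact_mod_cast hc2)
  rw [hr_def, hμl, hlα] at hrθ
  linear_combination (norm := module) hrθ

/-- For an extreme Heisenberg root `α` with neighbour `β` and `δ := θ - α - β`:
if `λ` is a root with `c_α(λ) = 0`, `⟪λ, α⟫ ≠ 0` and `δ + λ ∈ Ψ_α`, then `λ = β`. -/
theorem lam_eq_beta_of_delta_add_mem_psiSet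
    (hΦ : IsRootSystem Φ) (hirr : IsIrreducible Φ) (B : Base Φ)
    {θ α β : E} (hθ : IsHighest B θ) (hα : α ∈ B.Δ)
    (hext : IsExtreme B α β) (hH : IsHeisenberg B θ α)
    {l : E} (hl : l ∈ Φ) (hc : B.coeff l α = 0) (hne : ⟪l, α⟫_ℝ ≠ 0)
    (hmem : θ - α - β + l ∈ PsiSet B α) :
    l = β :=
  lam_eq_beta_of_delta_add_mem_psiSet_general hΦ B hθ hα hext hH hl hc hne hmem

end PaperRS
end
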